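/- arXiv:1103.3369 — 3 statements merged into one kernel-verified Lean document; each statement's English description precedes it below -/
import Mathlib

section
/- For every n ≥ 5, if G is a graph on n vertices such that both G and its complement are connected, then rvc(G) + rvc(complement of G) ≤ n − 1. -/
open SimpleGraph

/-- A coloring `c` (using colors `< k`) makes `G` rainbow vertex-connected: every pair of
vertices is joined by a path whose internal vertices receive distinct colors (all `< k`). -/
def IsRainbowVCColoring {V : Type*} (G : SimpleGraph V) (c : V → ℕ) (k : ℕ) : Prop :=
  ∀ u v : V, ∃ p : G.Walk u v, p.IsPath ∧
    (p.support.tail.dropLast.map c).Nodup ∧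
    ∀ x ∈ p.support.tail.dropLast, c x < k

/-- The rainbow vertex-connection number: the least number of colors making `G`
rainbow vertex-connected. -/
noncomputable def rvc {V : Type*} (G : SimpleGraph V) : ℕ :=
  sInf {k | ∃ c : V → ℕ, IsRainbowVCColoring G c k}

/-!
Every connected graph on `n ≥ 2` vertices has `rvc ≤ n - 2`: color injectively all vertices but
two leaves of a spanning tree, since a path in the tree never passes through a leaf.
If every two non-adjacent vertices of `G` have a common neighbour, one color suffices for `G`.
Otherwise two vertices `u`, `v` of `G` at distance at least three are adjacent in `Gᶜ` and every
other vertex is adjacent in `Gᶜ` to `u` or to `v`, so routing paths of `Gᶜ` through the edge `uv`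
and coloring `u`, `v` differently gives `rvc Gᶜ ≤ 2`. Applying this to `G` and to `Gᶜ`, either one
of the two numbers is at most `1` and the other at most `n - 2`, or both are at most `2`.
-/

namespace SimpleGraph

variable {V : Type*} {G : SimpleGraph V}

namespace Walk

variable {u v w : V}

lemma support_tail_dropLast_reverse (p : G.Walk u v) :
    p.reverse.support.tail.dropLast = p.support.tail.dropLast.reverse := by
  rw [support_reverse, List.tail_reverse, List.dropLast_reverse, List.tail_dropLast]

lemma support_tail_dropLast_sublist (p : G.Walk u v) :
    p.support.tail.dropLast.Sublist p.support :=
  (List.dropLast_sublist _).trans (List.tail_sublist _)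

lemma IsPath.start_notMem_support_tail_dropLast {p : G.Walk u v} (hp : p.IsPath) :
    u ∉ p.support.tail.dropLast := by
  have hnodup := hp.support_nodup
  rw [← p.cons_tail_support, List.nodup_cons] at hnodup
  exact fun hu ↦ hnodup.1 (List.dropLast_subset _ hu)

lemma IsPath.end_notMem_support_tail_dropLast {p : G.Walk u v} (hp : p.IsPath) :
    v ∉ p.support.tail.dropLast := by
  have := hp.reverse.start_notMem_support_tail_dropLast
  rwa [support_tail_dropLast_reverse, List.mem_reverse] at this

lemma IsPath.exists_adj_ne_of_mem_support_tail_dropLast {p : G.Walk u v} (hp : p.IsPath)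
    (hw : w ∈ p.support.tail.dropLast) : ∃ a b, a ≠ b ∧ G.Adj w a ∧ G.Adj w b := by
  induction p with
  | nil => simp at hw
  | @cons x y z h q ih =>
    rw [cons_isPath_iff] at hp
    rcases q with _ | ⟨h', q'⟩
    · simp at hw
    · rw [support_cons, List.tail_cons, support_cons, List.dropLast_cons_of_ne_nil (by simp),
        List.mem_cons] at hw
      rcases hw with rfl | hw
      · exact ⟨x, _, fun hx ↦ hp.2 (by simp [hx]), h.symm, h'⟩
      · exact ih hp.1 (by simpa using hw)

lemma exists_isPath_support_tail_dropLast_subset (p : G.Walk u v) {s : Set V}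
    (hs : ∀ x ∈ p.support, x ∈ s ∨ x = u ∨ x = v) :
    ∃ q : G.Walk u v, q.IsPath ∧ ∀ x ∈ q.support.tail.dropLast, x ∈ s := by
  classical
  refine ⟨p.toPath, p.toPath.2, fun x hx ↦ ?_⟩
  have hxp := p.support_toPath_subset_support (p.toPath.1.support_tail_dropLast_sublist.subset hx)
  rcases hs x hxp with hxs | rfl | rfl
  · exact hxs
  · exact absurd hx p.toPath.2.start_notMem_support_tail_dropLast
  · exact absurd hx p.toPath.2.end_notMem_support_tail_dropLast

lemma IsPath.notMem_support_tail_dropLast_of_degree_eq_one {l : V} {p : G.Walk u v}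
    (hp : p.IsPath) [Fintype (G.neighborSet l)] (hl : G.degree l = 1) :
    l ∉ p.support.tail.dropLast := fun hmem ↦ by
  obtain ⟨a, b, hab, ha, hb⟩ := hp.exists_adj_ne_of_mem_support_tail_dropLast hmem
  exact hab ((degree_eq_one_iff_existsUnique_adj.1 hl).unique ha hb)

end Walk

lemma Connected.exists_ne_forall_exists_isPath_notMem [Finite V] [Nontrivial V]
    (hG : G.Connected) : ∃ a b : V, a ≠ b ∧ ∀ x y : V, ∃ p : G.Walk x y, p.IsPath ∧
      a ∉ p.support.tail.dropLast ∧ b ∉ p.support.tail.dropLast := by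
  classical
  have := Fintype.ofFinite V
  obtain ⟨T, hTG, hT⟩ := hG.exists_isTree_le
  obtain ⟨a, b, hab, ha, hb⟩ := hT.exists_ne_and_degree_eq_one
  refine ⟨a, b, hab, fun x y ↦ ?_⟩
  obtain ⟨p, hp⟩ := hT.connected.exists_isPath x y
  refine ⟨p.mapLe hTG, hp.mapLe hTG, ?_⟩
  simp only [Walk.support_mapLe_eq_support]
  exact ⟨hp.notMem_support_tail_dropLast_of_degree_eq_one ha,
    hp.notMem_support_tail_dropLast_of_degree_eq_one hb⟩

end SimpleGraph

section

variable {V : Type*} {G : SimpleGraph V}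

lemma rvc_le {c : V → ℕ} {k : ℕ} (h : IsRainbowVCColoring G c k) : rvc G ≤ k :=
  Nat.sInf_le ⟨c, h⟩

lemma rvc_le_card (s : Finset V)
    (h : ∀ x y : V, ∃ p : G.Walk x y, p.IsPath ∧ ∀ w ∈ p.support.tail.dropLast, w ∈ s) :
    rvc G ≤ s.card := by
  classical
  let c : V → ℕ := fun x ↦ if hx : x ∈ s then s.equivFin ⟨x, hx⟩ else 0
  have hc : ∀ x ∈ s, ∀ y ∈ s, c x = c y → x = y := by
    intro x hx y hy hxy
    simp only [c, dif_pos hx, dif_pos hy] at hxy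
    simpa using s.equivFin.injective (Fin.ext hxy)
  refine rvc_le (c := c) fun x y ↦ ?_
  obtain ⟨p, hp, hps⟩ := h x y
  refine ⟨p, hp, ?_, fun w hw ↦ ?_⟩
  · exact List.Nodup.map_on (fun a ha b hb ↦ hc a (hps a ha) b (hps b hb))
      (p.support_tail_dropLast_sublist.nodup hp.support_nodup)
  · simp [c, dif_pos (hps w hw)]

lemma rvc_le_card_sub_two [Fintype V] [Nontrivial V] (hG : G.Connected) :
    rvc G ≤ Fintype.card V - 2 := by
  classical
  obtain ⟨a, b, hab, h⟩ := hG.exists_ne_forall_exists_isPath_notMem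
  rw [← Finset.card_pair hab, ← Finset.card_compl]
  refine rvc_le_card _ fun x y ↦ ?_
  obtain ⟨p, hp, ha, hb⟩ := h x y
  refine ⟨p, hp, fun w hw ↦ ?_⟩
  simp only [Finset.mem_compl, Finset.mem_insert, Finset.mem_singleton, not_or]
  exact ⟨ne_of_mem_of_not_mem hw ha, ne_of_mem_of_not_mem hw hb⟩

lemma rvc_le_one (h : ∀ x y : V, x ≠ y → ¬G.Adj x y → ∃ w, G.Adj x w ∧ G.Adj w y) :
    rvc G ≤ 1 := by
  refine rvc_le (c := fun _ ↦ 0) fun x y ↦ ?_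
  obtain ⟨w, q, hq⟩ : ∃ (w : V) (q : G.Walk x y), ∀ z ∈ q.support, z = w ∨ z = x ∨ z = y := by
    by_cases hxy : x = y
    · subst hxy
      exact ⟨x, .nil, by simp⟩
    by_cases hadj : G.Adj x y
    · exact ⟨x, hadj.toWalk, by simp⟩
    obtain ⟨w, hxw, hwy⟩ := h x y hxy hadj
    exact ⟨w, .cons hxw hwy.toWalk, by simp⟩
  obtain ⟨p, hp, hpw⟩ := q.exists_isPath_support_tail_dropLast_subset (s := {w}) hq
  refine ⟨p, hp, ?_, by simp⟩
  have hrep := List.eq_replicate_iff.2 ⟨rfl, hpw⟩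
  have hnodup := hrep ▸ p.support_tail_dropLast_sublist.nodup hp.support_nodup
  rw [List.map_const']
  exact List.nodup_replicate.2 (List.nodup_replicate.1 hnodup)

lemma rvc_le_two_of_dominating_adj {u v : V} (huv : G.Adj u v)
    (hdom : ∀ z, G.Adj z u ∨ G.Adj z v ∨ z = u ∨ z = v) : rvc G ≤ 2 := by
  classical
  have toWalk_u : ∀ x, ∃ q : G.Walk x u, ∀ z ∈ q.support, z = x ∨ z = u ∨ z = v := by
    intro x
    rcases hdom x with h | h | rfl | rfl
    · exact ⟨h.toWalk, by simp⟩
    · exact ⟨.cons h huv.symm.toWalk, by simp⟩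
    · exact ⟨.nil, by simp⟩
    · exact ⟨huv.symm.toWalk, by simp⟩
  refine (rvc_le_card {u, v} fun x y ↦ ?_).trans Finset.card_le_two
  obtain ⟨qx, hqx⟩ := toWalk_u x
  obtain ⟨qy, hqy⟩ := toWalk_u y
  obtain ⟨p, hp, hps⟩ := (qx.append qy.reverse).exists_isPath_support_tail_dropLast_subset
    (s := {u, v}) fun z hz ↦ by
      rw [Walk.support_append, List.mem_append] at hz
      rcases hz with hz | hz
      · rcases hqx z hz with h | h | h <;> simp [h]
      · rw [Walk.support_reverse] at hz
        rcases hqy z (List.mem_reverse.1 (List.tail_subset _ hz)) with h | h | h <;> simp [h]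
  exact ⟨p, hp, by simpa using hps⟩

lemma rvc_le_one_or_rvc_compl_le_two (G : SimpleGraph V) : rvc G ≤ 1 ∨ rvc Gᶜ ≤ 2 := by
  by_cases h : ∀ x y : V, x ≠ y → ¬G.Adj x y → ∃ w, G.Adj x w ∧ G.Adj w y
  · exact .inl (rvc_le_one h)
  push Not at h
  obtain ⟨u, v, huv, hnadj, hw⟩ := h
  refine .inr (rvc_le_two_of_dominating_adj ⟨huv, hnadj⟩ fun z ↦ ?_)
  simp only [compl_adj]
  by_cases hzu : z = u
  · tauto
  by_cases hzv : z = v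
  · tauto
  by_cases huz : G.Adj u z
  · exact .inr (.inl ⟨hzv, hw z huz⟩)
  · exact .inl ⟨hzu, fun h ↦ huz h.symm⟩

end

theorem rvc_add_compl_le {V : Type*} [Fintype V] (G : SimpleGraph V) (n : ℕ)
    (hn : 5 ≤ n) (hV : Fintype.card V = n) (hG : G.Connected) (hGc : Gᶜ.Connected) :
    rvc G + rvc Gᶜ ≤ n - 1 := by
  have : Nontrivial V := Fintype.one_lt_card_iff_nontrivial.1 (by omega)
  have hG₂ := rvc_le_card_sub_two hG
  have hGc₂ := rvc_le_card_sub_two hGc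
  have hG₁ := rvc_le_one_or_rvc_compl_le_two G
  have hGc₁ := rvc_le_one_or_rvc_compl_le_two Gᶜ
  rw [compl_compl] at hGc₁
  omega
end

section
/- If G is a connected graph and G' is obtained from G by adding one new vertex adjacent to at least one vertex of G, then rvc(G') ≤ rvc(G) + 1. -/
/-!
Take a coloring `c` of `G` with `rvc G` colors realising the minimum, pick a neighbour `s ∈ S`
of the new vertex and give `s` a fresh color. A path of `G` stays rainbow after the
recoloring, since the fresh color occurs only once; and the new vertex reaches any `v`
through the edge to `s` followed by a rainbow `s`–`v` path of `G`, whose only new internal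
vertex `s` carries the fresh color.
-/

open SimpleGraph

/-- The graph obtained from `G` by adding one new vertex (`none`) joined to the
vertices in `S`. -/
def addVertex {V : Type*} (G : SimpleGraph V) (S : Set V) : SimpleGraph (Option V) :=
  SimpleGraph.fromRel (fun x y =>
    match x, y with
    | some a, some b => G.Adj a b
    | none, some a => a ∈ S
    | _, _ => False)

open Function

namespace SimpleGraph.Walk

variable {V : Type*} {G : SimpleGraph V}

def internalVertices {u v : V} (p : G.Walk u v) : List V := p.support.tail.dropLast

lemma internalVertices_map {V' : Type*} {G' : SimpleGraph V'} (f : G →g G') {u v : V}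
    (p : G.Walk u v) : (p.map f).internalVertices = p.internalVertices.map f := by
  simp only [internalVertices, support_map, List.map_tail, List.map_dropLast]

lemma internalVertices_reverse {u v : V} (p : G.Walk u v) :
    p.reverse.internalVertices = p.internalVertices.reverse := by
  simp only [internalVertices, support_reverse, List.tail_reverse, List.dropLast_reverse,
    List.tail_dropLast]

lemma internalVertices_cons {u v w : V} (h : G.Adj u v) (p : G.Walk v w) :
    (cons h p).internalVertices = p.support.dropLast := rfl

lemma support_dropLast_sublist {u v : V} (p : G.Walk u v) :
    p.support.dropLast.Sublist (u :: p.internalVertices) := by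
  cases p with
  | nil => simp
  | cons h q => simp [internalVertices, List.dropLast_cons_of_ne_nil]

lemma IsPath.nodup_internalVertices {u v : V} {p : G.Walk u v} (hp : p.IsPath) :
    p.internalVertices.Nodup :=
  hp.support_nodup.sublist ((List.dropLast_sublist _).trans (List.tail_sublist _))

lemma IsPath.start_notMem_internalVertices {u v : V} {p : G.Walk u v} (hp : p.IsPath) :
    u ∉ p.internalVertices := by
  have hnodup := hp.support_nodup
  rw [← cons_tail_support, List.nodup_cons] at hnodup
  exact fun hu ↦ hnodup.1 ((List.dropLast_sublist _).mem hu)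

end SimpleGraph.Walk

section Rainbow

variable {V : Type*}

def IsRainbow (c : V → ℕ) (k : ℕ) (L : List V) : Prop :=
  (L.map c).Nodup ∧ ∀ x ∈ L, c x < k

lemma isRainbowVCColoring_iff {G : SimpleGraph V} {c : V → ℕ} {k : ℕ} :
    IsRainbowVCColoring G c k ↔
      ∀ u v : V, ∃ p : G.Walk u v, p.IsPath ∧ IsRainbow c k p.internalVertices :=
  Iff.rfl

lemma IsRainbow.sublist {c : V → ℕ} {k : ℕ} {L L' : List V} (h : IsRainbow c k L)
    (hL : L'.Sublist L) : IsRainbow c k L' :=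
  ⟨h.1.sublist (hL.map c), fun x hx ↦ h.2 x (hL.mem hx)⟩

@[simp]
lemma isRainbow_reverse {c : V → ℕ} {k : ℕ} {L : List V} :
    IsRainbow c k L.reverse ↔ IsRainbow c k L := by
  simp only [IsRainbow, List.map_reverse, List.nodup_reverse, List.mem_reverse]

@[simp]
lemma isRainbow_map {W : Type*} {c : W → ℕ} {k : ℕ} {f : V → W} {L : List V} :
    IsRainbow c k (L.map f) ↔ IsRainbow (c ∘ f) k L := by
  simp only [IsRainbow, List.map_map, List.forall_mem_map, comp_apply]

lemma isRainbow_of_injective {c : V → ℕ} {k : ℕ} {L : List V} (hc : Injective c)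
    (hL : L.Nodup) (hk : ∀ x ∈ L, c x < k) : IsRainbow c k L :=
  ⟨hL.map hc, hk⟩

lemma exists_isPath_isRainbow_comm {G : SimpleGraph V} {c : V → ℕ} {k : ℕ} {u v : V}
    (h : ∃ p : G.Walk u v, p.IsPath ∧ IsRainbow c k p.internalVertices) :
    ∃ p : G.Walk v u, p.IsPath ∧ IsRainbow c k p.internalVertices :=
  let ⟨p, hp, hpc⟩ := h
  ⟨p.reverse, hp.reverse, by rwa [Walk.internalVertices_reverse, isRainbow_reverse]⟩

variable [DecidableEq V]

lemma IsRainbow.update {c : V → ℕ} {k : ℕ} {L : List V} (h : IsRainbow c k L) (s : V) :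
    IsRainbow (Function.update c s k) (k + 1) L := by
  refine ⟨(h.1.of_map c).map_on fun x hx y hy hxy ↦ ?_, fun x hx ↦ ?_⟩
  · have := h.2 x hx; have := h.2 y hy
    by_cases hxs : x = s <;> by_cases hys : y = s <;>
      simp_all [update_of_ne, List.inj_on_of_nodup_map h.1 hx hy]
  · by_cases hxs : x = s
    · simp [hxs]
    · simpa [update_of_ne hxs] using (h.2 x hx).le

lemma IsRainbow.cons_update {c : V → ℕ} {k : ℕ} {L : List V} {s : V} (h : IsRainbow c k L)
    (hs : s ∉ L) : IsRainbow (Function.update c s k) (k + 1) (s :: L) := by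
  refine ⟨List.nodup_cons.2 ⟨fun hk ↦ ?_, (h.update s).1⟩, ?_⟩
  · rw [update_self, List.mem_map] at hk
    obtain ⟨x, hx, hxk⟩ := hk
    rw [update_of_ne (ne_of_mem_of_not_mem hx hs)] at hxk
    exact (h.2 x hx).ne hxk
  · simpa using (h.update s).2

end Rainbow

lemma SimpleGraph.Connected.exists_isRainbowVCColoring {V : Type*} [Finite V]
    {G : SimpleGraph V} (hG : G.Connected) : ∃ c k, IsRainbowVCColoring G c k := by
  classical
  obtain ⟨n, ⟨e⟩⟩ := Finite.exists_equiv_fin V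
  refine ⟨fun v ↦ e v, n, isRainbowVCColoring_iff.2 fun u v ↦ ?_⟩
  obtain ⟨p⟩ := hG.preconnected u v
  exact ⟨p.toPath, p.toPath.2, isRainbow_of_injective (Fin.val_injective.comp e.injective)
    p.toPath.2.nodup_internalVertices fun x _ ↦ (e x).isLt⟩

lemma SimpleGraph.Connected.exists_isRainbowVCColoring_rvc {V : Type*} [Finite V]
    {G : SimpleGraph V} (hG : G.Connected) : ∃ c, IsRainbowVCColoring G c (rvc G) :=
  let ⟨c, k, hc⟩ := hG.exists_isRainbowVCColoring
  Nat.sInf_mem (s := {k | ∃ c, IsRainbowVCColoring G c k}) ⟨k, c, hc⟩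

section AddVertex

variable {V : Type*} {G : SimpleGraph V} {S : Set V}

@[simp]
lemma addVertex_adj_some_some {a b : V} : (addVertex G S).Adj (some a) (some b) ↔ G.Adj a b := by
  simp only [addVertex, fromRel_adj, ne_eq, Option.some.injEq, G.adj_comm b a, or_self]
  exact ⟨And.right, fun h ↦ ⟨h.ne, h⟩⟩

@[simp]
lemma addVertex_adj_none_some {a : V} : (addVertex G S).Adj none (some a) ↔ a ∈ S := by
  simp [addVertex]

variable (G S) in
def addVertexEmbedding : G ↪g addVertex G S :=
  ⟨Embedding.some, addVertex_adj_some_some⟩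

variable [DecidableEq V]

lemma isRainbowVCColoring_addVertex {c : V → ℕ} {k : ℕ} {s : V}
    (hc : IsRainbowVCColoring G c k) (hs : s ∈ S) :
    IsRainbowVCColoring (addVertex G S) (Option.elim' 0 (Function.update c s k)) (k + 1) := by
  rw [isRainbowVCColoring_iff] at hc ⊢
  set ι := addVertexEmbedding G S
  -- the color of the new vertex is irrelevant: no path chosen below passes through it
  set c' := Option.elim' 0 (Function.update c s k)
  have old (u v : V) : ∃ p : (addVertex G S).Walk (ι u) (ι v),
      p.IsPath ∧ IsRainbow c' (k + 1) p.internalVertices := by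
    obtain ⟨p, hp, hpc⟩ := hc u v
    refine ⟨p.map ι.toHom, hp.map ι.injective, ?_⟩
    rw [Walk.internalVertices_map, isRainbow_map]
    exact hpc.update s
  have new (v : V) : ∃ p : (addVertex G S).Walk none (ι v),
      p.IsPath ∧ IsRainbow c' (k + 1) p.internalVertices := by
    obtain ⟨p, hp, hpc⟩ := hc s v
    have hadj : (addVertex G S).Adj none (ι s) := addVertex_adj_none_some.2 hs
    refine ⟨.cons hadj (p.map ι.toHom), ?_, ?_⟩
    · rw [Walk.cons_isPath_iff, Walk.support_map]
      exact ⟨hp.map ι.injective, by simp [ι, addVertexEmbedding]⟩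
    · rw [Walk.internalVertices_cons, Walk.support_map, ← List.map_dropLast, isRainbow_map]
      exact (hpc.cons_update hp.start_notMem_internalVertices).sublist p.support_dropLast_sublist
  rintro (_ | u) (_ | v)
  · exact ⟨.nil, by simp, by simp [IsRainbow, Walk.internalVertices]⟩
  · exact new v
  · exact exists_isPath_isRainbow_comm (new u)
  · exact old u v

end AddVertex

theorem rvc_addVertex_le_succ {V : Type*} [Fintype V] (G : SimpleGraph V)
    (hG : G.Connected) (S : Set V) (hS : S.Nonempty) :
    rvc (addVertex G S) ≤ rvc G + 1 := by
  classical
  obtain ⟨c, hc⟩ := hG.exists_isRainbowVCColoring_rvc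
  obtain ⟨s, hs⟩ := hS
  exact Nat.sInf_le ⟨_, isRainbowVCColoring_addVertex hc hs⟩
end

section
/- For every n ≥ 5 there exists a graph G on n vertices such that both G and its complement have diameter exactly 2 (and hence rvc(G) = rvc(complement of G) = 1, so rvc(G) + rvc(complement of G) = 2). -/
open SimpleGraph

/-!
Blow up the 5-cycle: pull `C₅` back along a surjection `Fin n → Fin 5`, so that each vertex of
`C₅` becomes an independent set of `G` and a clique of `Gᶜ`. Since `C₅` and its complement
both have diameter 2, a common neighbour of two non-adjacent vertices of `G` (resp. `Gᶜ`) can be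
lifted from `C₅` (resp. `C₅ᶜ`). In a graph of diameter 2 every pair is joined by a path with at
most one internal vertex, so one colour suffices, while zero colours would force the graph to be
complete.
-/

theorem List.nodup_of_length_le_one {α : Type*} {l : List α} (h : l.length ≤ 1) : l.Nodup := by
  match l, h with
  | [], _ => exact List.nodup_nil
  | [a], _ => exact List.nodup_singleton a

namespace SimpleGraph

variable {V W : Type*} {G : SimpleGraph V}

lemma ediam_eq_of_diam_eq {n : ℕ} (h : G.diam = n) (hn : n ≠ 0) : G.ediam = n := by
  rw [← h, diam, ENat.natCast_toNat (ediam_ne_top_of_diam_ne_zero (h ▸ hn))]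

lemma diam_eq_two_iff :
    G.diam = 2 ↔ G ≠ ⊤ ∧
      ∀ u v, u ≠ v → ¬G.Adj u v → (G.commonNeighbors u v).Nonempty := by
  constructor
  · intro h
    have : Nontrivial V := nontrivial_of_diam_ne_zero (h ▸ two_ne_zero)
    refine ⟨fun htop => by simp [htop, diam_top] at h, fun u v huv hadj => ?_⟩
    have hle : G.edist u v ≤ 2 := by
      exact_mod_cast ediam_eq_of_diam_eq h two_ne_zero ▸ edist_le_ediam
    by_contra hempty
    exact (two_lt_edist_iff.mpr ⟨huv, hadj, Set.not_nonempty_iff_eq_empty.mp hempty⟩).not_ge hle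
  · rintro ⟨hG, hcommon⟩
    obtain ⟨u, v, huv, hadj⟩ : ∃ u v, u ≠ v ∧ ¬G.Adj u v := by
      simpa [eq_top_iff_forall_ne_adj] using hG
    have hle : G.ediam ≤ 2 := ediam_le_of_edist_le fun a b => by
      by_contra! hlt
      obtain ⟨hab, hadj, hempty⟩ := two_lt_edist_iff.mp hlt
      exact (hcommon a b hab hadj).ne_empty hempty
    have hge : 2 ≤ G.ediam :=
      (edist_eq_two_iff.mpr ⟨huv, hadj, hcommon u v huv hadj⟩).ge.trans edist_le_ediam
    simp [diam, le_antisymm hle hge]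

lemma commonNeighbors_nonempty_of_diam_eq_two (h : G.diam = 2) {u v : V} (hadj : ¬G.Adj u v) :
    (G.commonNeighbors u v).Nonempty := by
  obtain ⟨-, hcommon⟩ := diam_eq_two_iff.mp h
  rcases ne_or_eq u v with huv | rfl
  · exact hcommon u v huv hadj
  have : Nontrivial V := nontrivial_of_diam_ne_zero (h ▸ two_ne_zero)
  obtain ⟨w, hwu⟩ := exists_ne u
  by_cases huw : G.Adj u w
  · exact ⟨w, (G.mem_commonNeighbors).mpr ⟨huw, huw⟩⟩
  · obtain ⟨x, hx⟩ := hcommon u w hwu.symm huw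
    obtain ⟨hux, -⟩ := (G.mem_commonNeighbors).mp hx
    exact ⟨x, (G.mem_commonNeighbors).mpr ⟨hux, hux⟩⟩

lemma diam_comap_eq_two {f : V → W} (hf : f.Surjective) {H : SimpleGraph W} (h : H.diam = 2) :
    (H.comap f).diam = 2 := by
  obtain ⟨hH, -⟩ := diam_eq_two_iff.mp h
  refine diam_eq_two_iff.mpr ⟨fun htop => hH ?_, fun u v _ hadj => ?_⟩
  · rw [eq_top_iff_forall_ne_adj] at htop ⊢
    intro a b hab
    obtain ⟨u, rfl⟩ := hf a
    obtain ⟨v, rfl⟩ := hf b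
    exact htop u v (ne_of_apply_ne f hab)
  · obtain ⟨c, hc⟩ := commonNeighbors_nonempty_of_diam_eq_two h hadj
    obtain ⟨w, rfl⟩ := hf c
    exact ⟨w, by simpa [mem_commonNeighbors] using hc⟩

lemma diam_compl_comap_eq_two {f : V → W} (hf : f.Surjective) {H : SimpleGraph W}
    (h : Hᶜ.diam = 2) : (H.comap f)ᶜ.diam = 2 := by
  obtain ⟨hH, hcommon⟩ := diam_eq_two_iff.mp h
  refine diam_eq_two_iff.mpr ⟨fun htop => hH ?_, fun u v huv hadj => ?_⟩
  · rw [eq_top_iff_forall_ne_adj] at htop ⊢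
    intro a b hab
    obtain ⟨u, rfl⟩ := hf a
    obtain ⟨v, rfl⟩ := hf b
    exact (compl_adj _ _ _).mpr ⟨hab, ((compl_adj _ _ _).mp (htop u v (ne_of_apply_ne f hab))).2⟩
  · have hHadj : H.Adj (f u) (f v) := by simpa [huv] using hadj
    obtain ⟨c, hc⟩ := hcommon (f u) (f v) hHadj.ne (by simp [hHadj])
    obtain ⟨w, rfl⟩ := hf c
    simp only [mem_commonNeighbors, compl_adj] at hc
    obtain ⟨⟨huw, huw'⟩, hvw, hvw'⟩ := hc
    exact ⟨w, by
      simp [mem_commonNeighbors, ne_of_apply_ne f huw, ne_of_apply_ne f hvw, huw', hvw']⟩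

lemma diam_cycleGraph_five : (cycleGraph 5).diam = 2 := by
  refine diam_eq_two_iff.mpr ⟨?_, ?_⟩
  · rw [Ne, eq_top_iff_forall_ne_adj]
    decide
  · simp only [Set.Nonempty, mem_commonNeighbors]
    decide

lemma diam_compl_cycleGraph_five : (cycleGraph 5)ᶜ.diam = 2 := by
  refine diam_eq_two_iff.mpr ⟨?_, ?_⟩
  · rw [Ne, eq_top_iff_forall_ne_adj]
    decide
  · simp only [Set.Nonempty, mem_commonNeighbors]
    decide

end SimpleGraph

section RainbowVertexConnection

variable {V : Type*} {G : SimpleGraph V}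

lemma isRainbowVCColoring_of_ediam_le_two (h : G.ediam ≤ 2) :
    IsRainbowVCColoring G (fun _ => 0) 1 := by
  intro u v
  have hedist : G.edist u v ≤ 2 := edist_le_ediam.trans h
  have hreach : G.Reachable u v := reachable_of_edist_ne_top (ne_top_of_le_ne_top (by simp) hedist)
  obtain ⟨p, hp, hlen⟩ := hreach.exists_path_of_dist
  have hp2 : p.length ≤ 2 := by
    rw [hlen]
    exact_mod_cast hreach.coe_dist_eq_edist ▸ hedist
  have hinner : p.support.tail.dropLast.length ≤ 1 := by
    simp only [List.length_dropLast, List.length_tail, Walk.length_support]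
    omega
  exact ⟨p, hp, List.nodup_of_length_le_one (by simpa using hinner), by simp⟩

lemma eq_top_of_isRainbowVCColoring_zero {c : V → ℕ}
    (h : IsRainbowVCColoring G c 0) : G = ⊤ := by
  refine eq_top_iff_forall_ne_adj.mpr fun u v huv => ?_
  obtain ⟨p, -, -, hlt⟩ := h u v
  have hinner : p.support.tail.dropLast = [] :=
    List.eq_nil_iff_forall_not_mem.mpr fun x hx => Nat.not_lt_zero _ (hlt x hx)
  have hpos : p.length ≠ 0 := fun h0 => huv (Walk.eq_of_length_eq_zero h0)
  have hlen := congrArg List.length hinner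
  simp only [List.length_dropLast, List.length_tail, Walk.length_support, List.length_nil] at hlen
  exact Walk.adj_of_length_eq_one (p := p) (by omega)

lemma rvc_eq_one_of_diam_eq_two (h : G.diam = 2) : rvc G = 1 := by
  have hcol : IsRainbowVCColoring G (fun _ => 0) 1 :=
    isRainbowVCColoring_of_ediam_le_two (by exact_mod_cast (ediam_eq_of_diam_eq h two_ne_zero).le)
  refine le_antisymm (Nat.sInf_le ⟨_, hcol⟩) (le_csInf ⟨1, _, hcol⟩ ?_)
  rintro k ⟨c, hc⟩
  rw [Nat.one_le_iff_ne_zero]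
  rintro rfl
  exact (diam_eq_two_iff.mp h).1 (eq_top_of_isRainbowVCColoring_zero hc)

end RainbowVertexConnection

theorem exists_self_compl_diam_two (n : ℕ) (hn : 5 ≤ n) :
    ∃ G : SimpleGraph (Fin n), G.diam = 2 ∧ Gᶜ.diam = 2 ∧
      rvc G = 1 ∧ rvc Gᶜ = 1 ∧ rvc G + rvc Gᶜ = 2 := by
  have : Nonempty (Fin n) := ⟨⟨0, by omega⟩⟩
  obtain ⟨f, hf⟩ : ∃ f : Fin n → Fin 5, f.Surjective :=
    ⟨_, Function.invFun_surjective (Fin.castLE_injective hn)⟩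
  have hG := diam_comap_eq_two hf diam_cycleGraph_five
  have hGc := diam_compl_comap_eq_two hf diam_compl_cycleGraph_five
  have hrvc := rvc_eq_one_of_diam_eq_two hG
  have hrvcc := rvc_eq_one_of_diam_eq_two hGc
  exact ⟨_, hG, hGc, hrvc, hrvcc, by rw [hrvc, hrvcc]⟩
end
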